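/- arXiv:1803.03293 — 2 statements merged into one kernel-verified Lean document; each statement's English description precedes it below -/
import Mathlib

section
/- Let K0, K1, K2, K3 be bounded operators on a Banach space X of real-valued functions such that I − K0² = −Σ_{i=1}^3 K_i², let A be a projection onto constants with A K0 = A and K0[c] = c for constants c, and suppose I + K0 is invertible on X and I − K0 restricted to X0 = ker A is invertible on X0. Define the Hilbert transform H[φ] = Σ e_i K_i (I+K0)^{-1}[φ] and G[ψ⃗] = −(I−K0)^{-1}(I−A) Σ_{i=1}^3 K_i[ψ_i]. Then G ∘ H = I on X0, i.e., G is a left inverse of H on the mean-zero subspace. -/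
noncomputable section

/-- With K0,…,K3 bounded operators satisfying I − K0² = −Σ Kᵢ², A the averaging
    projection onto constants with A K0 = A, P = (I+K0)⁻¹ on X, and Q = (I−K0)⁻¹ on the
    mean-zero subspace X0 = ker A, the operator G[ψ⃗] = −(I−K0)⁻¹(I−A) Σ Kᵢ[ψᵢ] is a left
    inverse of the Hilbert transform H[φ] = Σ eᵢ Kᵢ (I+K0)⁻¹[φ] on X0: G ∘ H = I on X0. -/
theorem stmt5 {X : Type*} [NormedAddCommGroup X] [NormedSpace ℝ X] [CompleteSpace X]
    (K0 K1 K2 K3 A P Q : X →L[ℝ] X)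
    (hinvol : ∀ ψ : X, ψ - K0 (K0 ψ) = -(K1 (K1 ψ) + K2 (K2 ψ) + K3 (K3 ψ)))
    (hAA : ∀ x, A (A x) = A x)
    (hAK0 : ∀ x, A (K0 x) = A x)
    (hP : ∀ x, P x + K0 (P x) = x)
    (hP' : ∀ x, P (x + K0 x) = x)
    (hQ : ∀ x, A x = 0 → Q (x - K0 x) = x)
    (hQ' : ∀ x, A x = 0 → (Q x - K0 (Q x) = x ∧ A (Q x) = 0)) :
    ∀ φ : X, A φ = 0 →
      -(Q ((K1 (K1 (P φ)) + K2 (K2 (P φ)) + K3 (K3 (P φ))) -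
          A (K1 (K1 (P φ)) + K2 (K2 (P φ)) + K3 (K3 (P φ))))) = φ := by
  intro φ hφ
  have hy : P φ + K0 (P φ) = φ := hP φ
  have hS : K1 (K1 (P φ)) + K2 (K2 (P φ)) + K3 (K3 (P φ)) = K0 (K0 (P φ)) - P φ := by
    have h := congrArg Neg.neg (hinvol (P φ))
    rw [neg_neg, neg_sub] at h
    exact h.symm
  have hAS : A (K1 (K1 (P φ)) + K2 (K2 (P φ)) + K3 (K3 (P φ))) = 0 := by
    rw [hS, map_sub, hAK0, hAK0, sub_self]
  rw [hAS, sub_zero, ← map_neg, hS, neg_sub]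
  have key : P φ - K0 (K0 (P φ)) = φ - K0 φ := by
    conv_rhs => rw [← hy]
    rw [map_add]; abel
  rw [key]
  exact hQ φ hφ
end
end

section
/- Let f be a nonvanishing real-valued C^1 function on an open set Ω ⊆ ℝ³. A C^1 quaternion-valued function W = W0 + W⃗ satisfies the main Vekua equation DW = (Df/f) · conj(W) on Ω if and only if div(f W⃗) = 0 and curl(f W⃗) = −f² ∇(W0/f) on Ω. -/
noncomputable section

/-- ℝ³ as the function space `Fin 3 → ℝ`. -/
abbrev V3 : Type := Fin 3 → ℝ

/-- The quaternion units e₁, e₂, e₃. -/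
def qe (i : Fin 3) : Quaternion ℝ :=
  ⟨0, if i = 0 then 1 else 0, if i = 1 then 1 else 0, if i = 2 then 1 else 0⟩

/-- Embedding of a vector of ℝ³ as a purely vectorial quaternion. -/
def vecQ (v : V3) : Quaternion ℝ := ⟨0, v 0, v 1, v 2⟩

/-- Partial derivative of a quaternion-valued function. -/
def pd (i : Fin 3) (w : V3 → Quaternion ℝ) (x : V3) : Quaternion ℝ :=
  fderiv ℝ w x (Pi.single i 1)

/-- The Moisil–Teodorescu (Dirac) operator D = Σ eᵢ ∂/∂xᵢ. -/
def Dop (w : V3 → Quaternion ℝ) (x : V3) : Quaternion ℝ :=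
  ∑ i : Fin 3, qe i * pd i w x

/-- Partial derivative of a real-valued function. -/
def pdR (i : Fin 3) (u : V3 → ℝ) (x : V3) : ℝ :=
  fderiv ℝ u x (Pi.single i 1)

/-- Gradient of a scalar function. -/
def gradR (u : V3 → ℝ) (x : V3) : V3 := fun i => pdR i u x

/-- Divergence of a vector field. -/
def divg (v : V3 → V3) (x : V3) : ℝ := ∑ i : Fin 3, pdR i (fun y => v y i) x

/-- Curl of a vector field. -/
def curl (v : V3 → V3) (x : V3) : V3 :=
  ![pdR 1 (fun y => v y 2) x - pdR 2 (fun y => v y 1) x,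
    pdR 2 (fun y => v y 0) x - pdR 0 (fun y => v y 2) x,
    pdR 0 (fun y => v y 1) x - pdR 1 (fun y => v y 0) x]

/-!
For `W = W0 + W⃗`, the Moisil–Teodorescu operator gives `DW = -div W⃗ + (∇W0 + curl W⃗)`,
and since `u⃗ v⃗ = -u⃗·v⃗ + u⃗ × v⃗` the right-hand side is `(∇f·W⃗ + W0 ∇f - ∇f × W⃗) / f`.
Multiplied by `f`, the scalar part becomes `f div W⃗ + ∇f·W⃗ = div (f W⃗) = 0` and the vector
part becomes `f curl W⃗ + ∇f × W⃗ = curl (f W⃗) = W0 ∇f - f ∇W0 = -f² ∇(W0/f)`.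
-/

open Matrix
open scoped Quaternion

@[simp] theorem vecQ_re (v : V3) : (vecQ v).re = 0 := rfl
@[simp] theorem vecQ_imI (v : V3) : (vecQ v).imI = v 0 := rfl
@[simp] theorem vecQ_imJ (v : V3) : (vecQ v).imJ = v 1 := rfl
@[simp] theorem vecQ_imK (v : V3) : (vecQ v).imK = v 2 := rfl

theorem qe_eq_vecQ (i : Fin 3) : qe i = vecQ (Pi.single i 1) := by
  fin_cases i <;> rfl

theorem coe_add_vecQ_inj {r s : ℝ} {v w : V3} :
    ((r : ℍ) + vecQ v = s + vecQ w) ↔ r = s ∧ v = w := by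
  simp [Quaternion.ext_iff, funext_iff, Fin.forall_fin_succ]

theorem star_coe_add_vecQ (r : ℝ) (v : V3) :
    star ((r : ℍ) + vecQ v) = r + vecQ (-v) := by
  ext <;> simp

theorem smul_coe_add_vecQ (a r : ℝ) (v : V3) :
    a • ((r : ℍ) + vecQ v) = ↑(a * r) + vecQ (a • v) := by
  ext <;> simp

theorem vecQ_mul_coe_add_vecQ (u : V3) (r : ℝ) (v : V3) :
    vecQ u * ((r : ℍ) + vecQ v) = ↑(-(u ⬝ᵥ v)) + vecQ (r • u + u ⨯₃ v) := by
  ext <;> simp [dotProduct, Fin.sum_univ_three, cross_apply, vecHead, vecTail] <;> ring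

section PartialDerivatives

variable {u v : V3 → ℝ} {x : V3}

theorem pdR_mul (hu : DifferentiableAt ℝ u x) (hv : DifferentiableAt ℝ v x) (i : Fin 3) :
    pdR i (fun y => u y * v y) x = u x * pdR i v x + v x * pdR i u x := by
  simp [pdR, fderiv_fun_mul hu hv]

theorem pdR_div (hu : DifferentiableAt ℝ u x) (hv : DifferentiableAt ℝ v x) (hvx : v x ≠ 0)
    (i : Fin 3) :
    pdR i (fun y => u y / v y) x = (v x ^ 2)⁻¹ * (v x * pdR i u x - u x * pdR i v x) := by
  have hinv : HasFDerivAt (fun y => (v y)⁻¹)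
      ((ContinuousLinearMap.toSpanSingleton ℝ (-(v x ^ 2)⁻¹)).comp (fderiv ℝ v x)) x :=
    (hasFDerivAt_inv hvx).comp x hv.hasFDerivAt
  simp only [div_eq_mul_inv]
  rw [pdR, fderiv_fun_mul hu hinv.differentiableAt, hinv.fderiv]
  simp only [_root_.add_apply, _root_.smul_apply,
    ContinuousLinearMap.comp_apply, ContinuousLinearMap.toSpanSingleton_apply, smul_eq_mul, pdR]
  field_simp
  ring

end PartialDerivatives

def vecQL : V3 →L[ℝ] ℍ :=
  LinearMap.toContinuousLinearMap
    { toFun := vecQ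
      map_add' := fun _ _ => by ext <;> simp
      map_smul' := fun _ _ => by ext <;> simp }

section Dirac

variable {W0 : V3 → ℝ} {Wv : V3 → V3} {x : V3}

theorem pdR_component_eq (hWv : DifferentiableAt ℝ Wv x) (i j : Fin 3) :
    pdR i (fun y => Wv y j) x = fderiv ℝ Wv x (Pi.single i 1) j := by
  rw [pdR, fderiv_apply hWv]
  rfl

theorem pd_coe_add_vecQ (hW0 : DifferentiableAt ℝ W0 x) (hWv : DifferentiableAt ℝ Wv x)
    (i : Fin 3) :
    pd i (fun y => (W0 y : ℍ) + vecQ (Wv y)) x =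
      ↑(pdR i W0 x) + vecQ (fun j => pdR i (fun y => Wv y j) x) := by
  have hcoe (r : ℝ) : (r : ℍ) = r • 1 := by ext <;> simp
  have hderiv : HasFDerivAt (fun y => (W0 y : ℍ) + vecQ (Wv y))
      ((fderiv ℝ W0 x).smulRight 1 + vecQL.comp (fderiv ℝ Wv x)) x := by
    simp only [hcoe]
    exact (hW0.hasFDerivAt.smul_const 1).add (vecQL.hasFDerivAt.comp x hWv.hasFDerivAt)
  simp only [pdR_component_eq hWv]
  rw [pd, hderiv.fderiv]
  ext <;> simp [vecQL, pdR]

theorem Dop_coe_add_vecQ (hW0 : DifferentiableAt ℝ W0 x) (hWv : DifferentiableAt ℝ Wv x) :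
    Dop (fun y => (W0 y : ℍ) + vecQ (Wv y)) x =
      ↑(-divg Wv x) + vecQ (gradR W0 x + curl Wv x) := by
  simp only [Dop, pd_coe_add_vecQ hW0 hWv, qe_eq_vecQ, vecQ_mul_coe_add_vecQ]
  ext <;>
    simp [Fin.sum_univ_three, divg, curl, gradR, dotProduct, cross_apply, vecHead, vecTail] <;> ring

end Dirac

section VectorCalculus

variable {f u v : V3 → ℝ} {Wv : V3 → V3} {x : V3}

theorem gradR_div (hu : DifferentiableAt ℝ u x) (hv : DifferentiableAt ℝ v x)
    (hvx : v x ≠ 0) :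
    gradR (fun y => u y / v y) x = (v x ^ 2)⁻¹ • (v x • gradR u x - u x • gradR v x) := by
  funext i
  simp [gradR, pdR_div hu hv hvx]

theorem divg_smul (hf : DifferentiableAt ℝ f x) (hWv : DifferentiableAt ℝ Wv x) :
    divg (fun y => f y • Wv y) x = f x * divg Wv x + gradR f x ⬝ᵥ Wv x := by
  have hWvi := differentiableAt_pi.1 hWv
  simp only [divg, Pi.smul_apply, smul_eq_mul, pdR_mul hf (hWvi _), dotProduct, gradR,
    Fin.sum_univ_three]
  ring

theorem curl_smul (hf : DifferentiableAt ℝ f x) (hWv : DifferentiableAt ℝ Wv x) :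
    curl (fun y => f y • Wv y) x = f x • curl Wv x + gradR f x ⨯₃ Wv x := by
  have hWvi := differentiableAt_pi.1 hWv
  simp only [curl, Pi.smul_apply, smul_eq_mul, pdR_mul hf (hWvi _), cross_apply, gradR,
    smul_vec3, vec3_add]
  apply vec3_eq <;> ring

end VectorCalculus

/-- The scalar and vector parts of the Vekua equation at a point, against `div (f W⃗) = 0` and
`curl (f W⃗) = -f² ∇(W0/f)` expanded by the product and quotient rules. -/
theorem vekua_components_iff {F a d : ℝ} {g w G c : V3} (hF : F ≠ 0) :
    (-d = F⁻¹ * -(g ⬝ᵥ -w) ∧ G + c = F⁻¹ • (a • g + g ⨯₃ -w)) ↔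
      (F * d + g ⬝ᵥ w = 0 ∧
        F • c + g ⨯₃ w = -(F ^ 2 • ((F ^ 2)⁻¹ • (F • G - a • g)))) := by
  rw [eq_inv_mul_iff_mul_eq₀ hF, eq_inv_smul_iff₀ hF, smul_inv_smul₀ (pow_ne_zero 2 hF),
    dotProduct_neg, neg_neg, map_neg]
  refine and_congr ⟨fun h => by linear_combination -h, fun h => by linear_combination -h⟩
    ⟨fun h => by linear_combination (norm := module) h,
      fun h => by linear_combination (norm := module) h⟩

/-- W = W0 + W⃗ (C¹) satisfies the main Vekua equation DW = (Df/f) conj(W)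
    on open Ω ⊆ ℝ³ (f real-valued, nonvanishing, C¹) iff div(f W⃗) = 0 and
    curl(f W⃗) = −f² ∇(W0/f) on Ω. -/
theorem stmt8 (Ω : Set V3) (hΩ : IsOpen Ω) (f W0 : V3 → ℝ) (Wv : V3 → V3)
    (hf : ContDiffOn ℝ 1 f Ω) (hfne : ∀ x ∈ Ω, f x ≠ 0)
    (hW0 : ContDiffOn ℝ 1 W0 Ω) (hWv : ContDiffOn ℝ 1 Wv Ω) :
    (∀ x ∈ Ω, Dop (fun y => ((W0 y : ℝ) : Quaternion ℝ) + vecQ (Wv y)) x =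
        (f x)⁻¹ • (vecQ (gradR f x) * star (((W0 x : ℝ) : Quaternion ℝ) + vecQ (Wv x)))) ↔
      (∀ x ∈ Ω, divg (fun y => f y • Wv y) x = 0 ∧
        curl (fun y => f y • Wv y) x = -((f x) ^ 2 • gradR (fun z => W0 z / f z) x)) := by
  refine forall₂_congr fun x hx => ?_
  have hfx := (hf.contDiffAt (hΩ.mem_nhds hx)).differentiableAt one_ne_zero
  have hW0x := (hW0.contDiffAt (hΩ.mem_nhds hx)).differentiableAt one_ne_zero
  have hWvx := (hWv.contDiffAt (hΩ.mem_nhds hx)).differentiableAt one_ne_zero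
  rw [Dop_coe_add_vecQ hW0x hWvx, star_coe_add_vecQ, vecQ_mul_coe_add_vecQ, smul_coe_add_vecQ,
    coe_add_vecQ_inj, divg_smul hfx hWvx, curl_smul hfx hWvx, gradR_div hW0x hfx (hfne x hx)]
  exact vekua_components_iff (hfne x hx)
end
end
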